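/- Let f : 𝔻 → 𝔻 be holomorphic with Aleksandrov–Clark measures {μ_α}_{α ∈ 𝕋} defined by (1 - |f(z)|²)/|α - f(z)|² = ∫_𝕋 (1 - |z|²)/|ζ - z|² dμ_α(ζ) for z ∈ 𝔻. Then for every continuous function h on 𝕋, ∫_𝕋 h dm = ∫_𝕋 (∫_𝕋 h dμ_α) dm(α). -/

import Mathlib

open MeasureTheory Metric Filter Topology Set Complex
open scoped ENNReal

noncomputable section

/-- The unit circle in ℂ. -/
def unitCircle : Set ℂ := Metric.sphere 0 1

/-- Normalized Lebesgue (arclength) measure on the unit circle, as a measure on ℂ. -/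
def m : Measure ℂ :=
  Measure.map (fun θ : ℝ => Complex.exp (θ * Complex.I))
    ((ENNReal.ofReal (2 * Real.pi)⁻¹) • (volume.restrict (Set.Ioc 0 (2 * Real.pi))))

/-- `I` is a (relatively open, nonempty, proper or full) open arc of the unit circle. -/
def IsArc (I : Set ℂ) : Prop :=
  ∃ a b : ℝ, a < b ∧ b - a ≤ 2 * Real.pi ∧
    I = (fun θ : ℝ => Complex.exp (θ * Complex.I)) '' Set.Ioo a b

/-- `fb` is the a.e. radial (nontangential) boundary value function of `f`. -/
def RadialLimitsAE (f fb : ℂ → ℂ) : Prop :=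
  ∀ᵐ z ∂m, Tendsto (fun r : ℝ => f (r • z)) (𝓝[<] (1:ℝ)) (𝓝 (fb z))

/-- Nontangential limit: limit along every Stolz region at `lam`. -/
def NTendsTo (g : ℂ → ℂ) (lam L : ℂ) : Prop :=
  ∀ M : ℝ, 1 < M →
    Tendsto g (𝓝[{z : ℂ | ‖lam - z‖ < M * (1 - ‖z‖)}] lam) (𝓝 L)

/-- `f` has a finite Carathéodory angular derivative at `lam`: the nontangential limit of `f`
at `lam` exists and is unimodular, and `f'` has a finite nontangential limit at `lam`. -/
def HasCaraDeriv (f : ℂ → ℂ) (lam : ℂ) : Prop :=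
  ∃ w L : ℂ, ‖w‖ = 1 ∧ NTendsTo f lam w ∧ NTendsTo (deriv f) lam L

/-- The set of points of the unit circle where `f` has a finite Carathéodory angular
derivative. -/
def Cf (f : ℂ → ℂ) : Set ℂ := {lam | lam ∈ unitCircle ∧ HasCaraDeriv f lam}

/-- The squared H² norm: sup over radii of mean squares on circles. -/
def h2sq (φ : ℂ → ℂ) : ℝ≥0∞ :=
  ⨆ r ∈ Set.Ico (0:ℝ) 1, ∫⁻ z, ENNReal.ofReal (‖φ (r • z)‖ ^ 2) ∂m

/-- Membership in the Hardy space H² of the unit disc. -/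
def MemH2 (φ : ℂ → ℂ) : Prop :=
  DifferentiableOn ℂ φ (Metric.ball 0 1) ∧ h2sq φ < ⊤

/-- The maximal complementary arcs of `E`: the connected components of `unitCircle \ E`. -/
def arcsOf (E : Set ℂ) : Set (Set ℂ) :=
  {A | ∃ x ∈ unitCircle \ E, A = connectedComponentIn (unitCircle \ E) x}

/-- The entropy sum `Σ |I| log(1/|I|)` over complementary arcs is finite. -/
def entropySummable (E : Set ℂ) : Prop :=
  Summable (fun A : arcsOf E => (m (A : Set ℂ)).toReal * Real.log (1 / (m (A : Set ℂ)).toReal))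

/-- Beurling–Carleson set of finite entropy. -/
def IsBC (E : Set ℂ) : Prop :=
  IsClosed E ∧ E ⊆ unitCircle ∧ m E = 0 ∧ entropySummable E

/-- `φ` is an outer function with boundary values `φb`. -/
def IsOuter (φ φb : ℂ → ℂ) : Prop :=
  RadialLimitsAE φ φb ∧
  Integrable (fun z => Real.log (‖φb z‖)) m ∧
  ∃ c : ℂ, ‖c‖ = 1 ∧ ∀ z ∈ Metric.ball (0:ℂ) 1,
    φ z = c * Complex.exp (∫ ζ, ((ζ + z) / (ζ - z)) * ((Real.log (‖φb ζ‖) : ℝ) : ℂ) ∂m)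

/-- `∫ |g(z)|² / |z - l|² dm(z)` as an extended-real integral. -/
def kint (g : ℂ → ℂ) (l : ℂ) : ℝ≥0∞ :=
  ∫⁻ z, ENNReal.ofReal (‖g z‖ ^ 2) / ENNReal.ofReal (‖z - l‖ ^ 2) ∂m

lemma contExpMap : Continuous (fun θ : ℝ => Complex.exp (θ * Complex.I)) := by
  exact Complex.continuous_exp.comp (by continuity)

lemma expMap_mem_circle (θ : ℝ) : Complex.exp (θ * Complex.I) ∈ unitCircle := by
  simp [unitCircle, mem_sphere_zero_iff_norm, Complex.norm_exp_ofReal_mul_I]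

lemma m_ae_circle : ∀ᵐ z ∂m, z ∈ unitCircle := by
  rw [m, MeasureTheory.ae_map_iff contExpMap.aemeasurable]
  · filter_upwards with θ using expMap_mem_circle θ
  · exact (isClosed_sphere (x := (0:ℂ)) (ε := 1)).measurableSet

instance : IsProbabilityMeasure m := by
  constructor
  rw [m, Measure.map_apply contExpMap.measurable MeasurableSet.univ]
  rw [Set.preimage_univ, Measure.smul_apply, Measure.restrict_apply MeasurableSet.univ,
    Set.univ_inter, Real.volume_Ioc, smul_eq_mul, ← ENNReal.ofReal_mul (by positivity)]
  rw [show (2 * Real.pi)⁻¹ * (2 * Real.pi - 0) = 1 by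
    rw [sub_zero]; field_simp]
  simp

lemma integral_m {E : Type*} [NormedAddCommGroup E] [NormedSpace ℝ E] (g : ℂ → E)
    (hg : AEStronglyMeasurable g m) :
    ∫ z, g z ∂m
      = (2*Real.pi)⁻¹ • ∫ θ in Set.Ioc 0 (2*Real.pi), g (Complex.exp (θ * Complex.I)) := by
  rw [m, MeasureTheory.integral_map contExpMap.aemeasurable (by rwa [← m]),
    integral_smul_measure, ENNReal.toReal_ofReal (by positivity)]

lemma abs_one_sub_conj_mul {z ζ : ℂ} (hζ : ‖ζ‖ = 1) :
    ‖1 - (starRingEnd ℂ) z * ζ‖ = ‖ζ - z‖ := by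
  have h1 : ‖(starRingEnd ℂ) (1 - (starRingEnd ℂ) z * ζ)‖ = ‖1 - (starRingEnd ℂ) z * ζ‖ :=
    Complex.norm_conj _
  rw [← h1]
  have h2 : (starRingEnd ℂ) (1 - (starRingEnd ℂ) z * ζ) = (starRingEnd ℂ) ζ * (ζ - z) := by
    have : (starRingEnd ℂ) ζ * ζ = 1 := by
      rw [← Complex.normSq_eq_conj_mul_self, ← Complex.sq_norm, hζ]; norm_num
    simp only [map_sub, map_one, map_mul, Complex.conj_conj]
    linear_combination -this
  rw [h2, norm_mul, Complex.norm_conj, hζ, one_mul]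

lemma poisson_re {z ζ : ℂ} (hζ : ‖ζ‖ = 1) :
    (1 - ‖z‖ ^ 2) / ‖ζ - z‖ ^ 2
      = ((1 + (starRingEnd ℂ) z * ζ) / (1 - (starRingEnd ℂ) z * ζ)).re := by
  set a := (starRingEnd ℂ) z * ζ with ha
  have hnsq : Complex.normSq a = ‖z‖ ^ 2 := by
    rw [← Complex.sq_norm, ha, norm_mul, Complex.norm_conj, hζ, mul_one]
  have hden : Complex.normSq (1 - a) = ‖ζ - z‖ ^ 2 := by
    rw [← Complex.sq_norm, abs_one_sub_conj_mul hζ]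
  rw [Complex.div_re, hden]
  have h1 : (1 + a).re * (1 - a).re + (1 + a).im * (1 - a).im
      = 1 - Complex.normSq a := by
    simp [Complex.normSq_apply]; ring
  rw [← add_div, h1, hnsq]

lemma circle_mean_value {c : ℂ} (hc : ‖c‖ < 1) :
    ∫ θ in Set.Ioc 0 (2*Real.pi),
      ((1 + c * Complex.exp (θ*Complex.I)) / (1 - c * Complex.exp (θ*Complex.I))).re
      = 2 * Real.pi := by
  set g : ℂ → ℂ := fun w => (1 + c * w) / (1 - c * w) with hg
  have hne : ∀ w : ℂ, ‖w‖ ≤ 1 → 1 - c * w ≠ 0 := by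
    intro w hw h
    have : ‖c * w‖ < 1 := by
      rw [norm_mul]
      calc ‖c‖ * ‖w‖ ≤ ‖c‖ * 1 :=
            mul_le_mul_of_nonneg_left hw (norm_nonneg c)
        _ < 1 := by simpa using hc
    have h1 : c * w = 1 := by linear_combination -h
    rw [h1] at this; simp at this
  have hdiff : DifferentiableOn ℂ g (closedBall (0:ℂ) 1) := by
    intro w hw
    refine DifferentiableAt.differentiableWithinAt ?_
    apply DifferentiableAt.div
    · exact (differentiableAt_const _).add ((differentiableAt_const _).mul differentiableAt_id)
    · exact (differentiableAt_const _).sub ((differentiableAt_const _).mul differentiableAt_id)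
    · exact hne w (by simpa using mem_closedBall_zero_iff.mp hw)
  have hcont : DiffContOnCl ℂ g (ball 0 1) := by
    apply DifferentiableOn.diffContOnCl
    rwa [closure_ball (0:ℂ) one_ne_zero]
  have hC := hcont.circleIntegral_sub_inv_smul (mem_ball_self one_pos)
  have hg0 : g 0 = 1 := by simp [hg]
  rw [hg0, smul_eq_mul, mul_one] at hC
  have hexp : ∀ θ : ℝ, circleMap 0 1 θ = Complex.exp (θ * Complex.I) := by
    intro θ; simp [circleMap]
  have hC2 : ∫ θ in (0:ℝ)..(2*Real.pi), Complex.I * g (Complex.exp (θ * Complex.I))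
      = 2 * Real.pi * Complex.I := by
    rw [← hC]
    simp only [circleIntegral, deriv_circleMap, hexp, smul_eq_mul, sub_zero]
    congr 1
    ext θ
    have hne0 : Complex.exp (θ * Complex.I) ≠ 0 := Complex.exp_ne_zero _
    field_simp
  have hC3 : ∫ θ in (0:ℝ)..(2*Real.pi), g (Complex.exp (θ * Complex.I))
      = 2 * Real.pi := by
    rw [intervalIntegral.integral_const_mul] at hC2
    apply mul_left_cancel₀ Complex.I_ne_zero
    rw [hC2]; ring
  have hcontg : Continuous fun θ : ℝ => g (Complex.exp (θ * Complex.I)) := by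
    apply Continuous.div
    · exact continuous_const.add (continuous_const.mul contExpMap)
    · exact continuous_const.sub (continuous_const.mul contExpMap)
    · intro θ
      exact hne _ (le_of_eq (Complex.norm_exp_ofReal_mul_I θ))
  have hInt : IntervalIntegrable (fun θ : ℝ => g (Complex.exp (θ * Complex.I)))
      volume 0 (2*Real.pi) := hcontg.intervalIntegrable _ _
  have hre : ∫ θ in (0:ℝ)..(2*Real.pi), (g (Complex.exp (θ * Complex.I))).re
      = (∫ θ in (0:ℝ)..(2*Real.pi), g (Complex.exp (θ * Complex.I))).re := by
    have := Complex.reCLM.intervalIntegral_comp_comm hInt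
    simpa using this
  rw [← intervalIntegral.integral_of_le (by positivity : (0:ℝ) ≤ 2*Real.pi)]
  rw [hre, hC3]
  simp

lemma poisson_integral_one {z : ℂ} (hz : ‖z‖ < 1) :
    ∫ ζ, (1 - ‖z‖ ^ 2) / ‖ζ - z‖ ^ 2 ∂m = 1 := by
  have hmeas : AEStronglyMeasurable (fun ζ : ℂ => (1 - ‖z‖ ^ 2) / ‖ζ - z‖ ^ 2) m := by
    apply Measurable.aestronglyMeasurable
    apply Measurable.div measurable_const
    exact ((continuous_norm.comp (continuous_id.sub continuous_const)).pow 2).measurable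
  rw [integral_m _ hmeas]
  have : ∀ θ : ℝ, (1 - ‖z‖ ^ 2) / ‖Complex.exp (θ*Complex.I) - z‖ ^ 2
      = ((1 + (starRingEnd ℂ) z * Complex.exp (θ*Complex.I)) / (1 - (starRingEnd ℂ) z * Complex.exp (θ*Complex.I))).re := by
    intro θ
    exact poisson_re (Complex.norm_exp_ofReal_mul_I θ)
  simp only [this]
  rw [circle_mean_value (by simpa [Complex.norm_conj] using hz)]
  rw [smul_eq_mul]
  field_simp

lemma aesm_of_continuousOn {E : Type*} [TopologicalSpace E] [TopologicalSpace.PseudoMetrizableSpace E]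
    {g : ℂ → E} {s : Set ℂ} (hs : IsOpen s) (hsub : unitCircle ⊆ s)
    (hg : ContinuousOn g s) : AEStronglyMeasurable g m := by
  have hres : m.restrict s = m :=
    Measure.restrict_eq_self_of_ae_mem (m_ae_circle.mono fun z hz => hsub hz)
  rw [← hres]
  exact hg.aestronglyMeasurable hs.measurableSet

lemma integrable_of_bdd {g : ℂ → ℝ} {ν : Measure ℂ} [IsFiniteMeasure ν]
    (hm : AEStronglyMeasurable g ν) {C : ℝ} (hb : ∀ᵐ z ∂ν, ‖g z‖ ≤ C) : Integrable g ν :=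
  Integrable.mono' (integrable_const C) hm hb

lemma meas_kernel (c : ℝ) (z : ℂ) :
    Measurable fun w : ℂ => c / ‖w - z‖ ^ 2 :=
  measurable_const.div
    (((continuous_norm.comp (continuous_id.sub continuous_const)).pow 2).measurable)

lemma kernel_nonneg {c : ℝ} (hc : 0 ≤ c) (z w : ℂ) : 0 ≤ c / ‖w - z‖ ^ 2 :=
  div_nonneg hc (by positivity)

lemma abs_smul_circle {r : ℝ} (hr : 0 ≤ r) {ζ : ℂ} (hζ : ζ ∈ unitCircle) :
    ‖r • ζ‖ = r := by
  have hζ' : ‖ζ‖ = 1 := by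
    simpa [unitCircle, mem_sphere_zero_iff_norm] using hζ
  rw [Complex.real_smul, norm_mul, Complex.norm_of_nonneg hr, hζ', mul_one]

/-- Step B: uniform convergence of the Poisson extension on the circle. -/
lemma poisson_unif (g : ℂ → ℝ) (hcont : Continuous g) (C : ℝ) (hC : ∀ z, |g z| ≤ C)
    {ε : ℝ} (hε : 0 < ε) :
    ∃ r₀ : ℝ, 0 < r₀ ∧ r₀ < 1 ∧ ∀ r : ℝ, r₀ ≤ r → r < 1 → ∀ ζ ∈ unitCircle,
      |(∫ w, g w * ((1 - r^2) / ‖w - r•ζ‖ ^ 2) ∂m) - g ζ| ≤ ε := by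
  have hC0 : 0 ≤ C := le_trans (abs_nonneg _) (hC 0)
  -- uniform continuity on the sphere
  have hu : UniformContinuousOn g (sphere (0:ℂ) 1) :=
    (isCompact_sphere 0 1).uniformContinuousOn_of_continuous hcont.continuousOn
  obtain ⟨δ, hδ, hδ'⟩ := (Metric.uniformContinuousOn_iff_le.mp hu) (ε/2) (by positivity)
  set r₀ : ℝ := max (1/2) (max (1 - δ/2) (1 - ε*δ^2/(32*(C+1)))) with hr₀
  have hr₀1 : r₀ < 1 := by
    simp only [hr₀, max_lt_iff]
    refine ⟨by norm_num, by nlinarith, by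
      have : 0 < ε*δ^2/(32*(C+1)) := by positivity
      linarith⟩
  refine ⟨r₀, lt_of_lt_of_le (by norm_num) (le_max_left _ _), hr₀1, ?_⟩
  intro r hr hr1 ζ hζ
  have hζ1 : ‖ζ‖ = 1 := by
    simpa [unitCircle, mem_sphere_zero_iff_norm] using hζ
  have hr0 : (0:ℝ) < r := lt_of_lt_of_le (by norm_num) (le_trans (le_max_left _ _) hr)
  have hrδ : 1 - r ≤ δ/2 := by
    have := le_trans (le_trans (le_max_left _ _) (le_max_right (1/2) _)) hr
    linarith
  have hrε : (1 - r) * (32 * C) ≤ ε * δ^2 := by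
    have h1 : 1 - ε*δ^2/(32*(C+1)) ≤ r :=
      le_trans (le_trans (le_max_right _ _) (le_max_right (1/2) _)) hr
    have h2 : (1 - r) * (32*(C+1)) ≤ ε*δ^2 := by
      rw [← le_div_iff₀ (by positivity : (0:ℝ) < 32*(C+1))]
      linarith
    nlinarith [hr1, hC0]
  set z : ℂ := r • ζ with hz
  have hzabs : ‖z‖ = r := abs_smul_circle (le_of_lt hr0) hζ
  have hzlt : ‖z‖ < 1 := by rw [hzabs]; exact hr1
  set P : ℂ → ℝ := fun w => (1 - r^2) / ‖w - z‖ ^ 2 with hP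
  have hPint1 : ∫ w, P w ∂m = 1 := by
    have := poisson_integral_one hzlt
    rw [hzabs] at this
    exact this
  have hPmeas : Measurable P := meas_kernel _ _
  have hPnonneg : ∀ w, 0 ≤ P w := fun w => kernel_nonneg (by nlinarith) _ _
  have habs_norm : ∀ x : ℂ, ‖x‖ = ‖x‖ := fun x => rfl
  -- a.e. bound for P on the circle
  have hPbdd : ∀ w ∈ unitCircle, P w ≤ (1-r^2) / (1-r)^2 := by
    intro w hw
    have hw1 : ‖w‖ = 1 := by
      simpa [unitCircle, mem_sphere_zero_iff_norm] using hw
    have hlow : 1 - r ≤ ‖w - z‖ := by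
      calc 1 - r = ‖w‖ - ‖z‖ := by rw [hw1, hzabs]
        _ ≤ ‖w - z‖ := by
            exact norm_sub_norm_le w z
    apply div_le_div_of_nonneg_left (by nlinarith) (by nlinarith) ?_
    · exact pow_le_pow_left₀ (by linarith) hlow 2
  -- integrability facts
  have hPintg : Integrable P m := by
    apply integrable_of_bdd hPmeas.aestronglyMeasurable (C := (1-r^2)/(1-r)^2)
    filter_upwards [m_ae_circle] with w hw
    rw [Real.norm_eq_abs, _root_.abs_of_nonneg (hPnonneg w)]
    exact hPbdd w hw
  have hgPintg : Integrable (fun w => g w * P w) m := by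
    apply integrable_of_bdd ((hcont.measurable.mul hPmeas).aestronglyMeasurable)
      (C := C * ((1-r^2)/(1-r)^2))
    filter_upwards [m_ae_circle] with w hw
    rw [Real.norm_eq_abs, Pi.mul_apply, abs_mul, _root_.abs_of_nonneg (hPnonneg w)]
    exact mul_le_mul (hC w) (hPbdd w hw) (hPnonneg w) hC0
  have hgζPintg : Integrable (fun w => g ζ * P w) m := hPintg.const_mul _
  -- rewrite the difference as an integral
  have hdiff : (∫ w, g w * P w ∂m) - g ζ = ∫ w, (g w - g ζ) * P w ∂m := by
    have h1 : g ζ = ∫ w, g ζ * P w ∂m := by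
      rw [integral_const_mul, hPint1, mul_one]
    conv_lhs => rw [h1]
    rw [← integral_sub hgPintg hgζPintg]
    congr 1; ext w; ring
  rw [hdiff]
  -- the dominating bound
  set B : ℂ → ℝ := fun w => (ε/2) * P w + (1-r) * (16*C) / δ^2 with hB
  have hBintg : Integrable B m := (hPintg.const_mul _).add (integrable_const _)
  have hbound : ∀ᵐ w ∂m, ‖(g w - g ζ) * P w‖ ≤ B w := by
    filter_upwards [m_ae_circle] with w hw
    have hw1 : ‖w‖ = 1 := by
      simpa [unitCircle, mem_sphere_zero_iff_norm] using hw
    rw [Real.norm_eq_abs, abs_mul, _root_.abs_of_nonneg (hPnonneg w)]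
    by_cases hcase : dist w ζ ≤ δ
    · have h1 : |g w - g ζ| ≤ ε/2 := by
        have := hδ' w (by simpa [unitCircle] using hw) ζ (by simpa [unitCircle] using hζ) hcase
        rwa [Real.dist_eq] at this
      have h2 : |g w - g ζ| * P w ≤ (ε/2) * P w :=
        mul_le_mul_of_nonneg_right h1 (hPnonneg w)
      have h3 : 0 ≤ (1-r) * (16*C) / δ^2 :=
        div_nonneg (mul_nonneg (by linarith) (by linarith)) (by positivity)
      simp only [hB]; linarith
    · push_neg at hcase
      have hfar : δ/2 ≤ ‖w - z‖ := by
        have h1 : ‖ζ - z‖ = 1 - r := by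
          have : ζ - z = (1 - r) • ζ := by
            simp only [hz]; module
          rw [this, abs_smul_circle (by linarith) hζ]
        calc δ/2 = δ - δ/2 := by ring
          _ ≤ ‖w - ζ‖ - ‖ζ - z‖ := by
              rw [h1]
              have hwζ : δ < ‖w - ζ‖ := by rwa [Complex.dist_eq] at hcase
              linarith [hrδ]
          _ ≤ ‖w - z‖ := by
              have := norm_sub_le (w - z) (z - ζ)
              have heq : w - ζ = (w - z) + (z - ζ) := by ring
              rw [heq]
              calc ‖(w - z) + (z - ζ)‖ - ‖ζ - z‖ ≤ (‖w - z‖ + ‖z - ζ‖) - ‖ζ - z‖ := by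
                    linarith [norm_add_le (w - z) (z - ζ)]
                _ = ‖w - z‖ := by rw [norm_sub_rev z ζ]; ring
      have hPsmall : P w ≤ (1-r) * 8 / δ^2 := by
        have hd2 : (δ/2)^2 ≤ ‖w - z‖ ^ 2 := by
          apply pow_le_pow_left₀ (by positivity) hfar
        have h0 : (0:ℝ) < (δ/2)^2 := by positivity
        calc P w ≤ (1 - r^2) / (δ/2)^2 := by
              apply div_le_div_of_nonneg_left (by nlinarith) h0 hd2
          _ ≤ (1-r) * 8 / δ^2 := by
              rw [div_le_div_iff₀ h0 (by positivity)]
              nlinarith [sq_nonneg (δ*(1-r))]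
      have h2C : |g w - g ζ| ≤ 2*C := by
        calc |g w - g ζ| ≤ |g w| + |g ζ| := abs_sub _ _
          _ ≤ C + C := add_le_add (hC w) (hC ζ)
          _ = 2*C := by ring
      have : |g w - g ζ| * P w ≤ (2*C) * ((1-r) * 8 / δ^2) :=
        mul_le_mul h2C hPsmall (hPnonneg w) (by linarith)
      have h4 : 0 ≤ (ε/2) * P w := mul_nonneg (by positivity) (hPnonneg w)
      simp only [hB]
      calc |g w - g ζ| * P w ≤ (2*C) * ((1-r) * 8 / δ^2) := this
        _ = (1-r) * (16*C) / δ^2 := by ring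
        _ ≤ (ε/2) * P w + (1-r) * (16*C) / δ^2 := by linarith
  -- conclude
  have hnorm := norm_integral_le_of_norm_le hBintg hbound
  have hBint : ∫ w, B w ∂m = ε/2 + (1-r) * (16*C) / δ^2 := by
    simp only [hB]
    rw [integral_add (hPintg.const_mul _) (integrable_const _), integral_const_mul, hPint1,
      integral_const]
    simp [measure_univ]
  have hlast : (1-r) * (16*C) / δ^2 ≤ ε/2 := by
    rw [div_le_iff₀ (by positivity)]
    nlinarith [hrε]
  rw [← Real.norm_eq_abs]
  calc ‖∫ w, (g w - g ζ) * P w ∂m‖ ≤ ∫ w, B w ∂m := hnorm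
    _ = ε/2 + (1-r) * (16*C) / δ^2 := hBint
    _ ≤ ε := by linarith

lemma kernel_symm {ρ : ℝ} {w ζ : ℂ} (hw : ‖w‖ = 1) (hζ : ‖ζ‖ = 1) :
    ‖ζ - ρ • w‖ = ‖w - ρ • ζ‖ := by
  have h1 : ‖(starRingEnd ℂ) w * (ζ - ρ • w)‖ = ‖ζ - ρ • w‖ := by
    rw [norm_mul, Complex.norm_conj, hw, one_mul]
  have h2 : ‖(starRingEnd ℂ) ζ * (w - ρ • ζ)‖ = ‖w - ρ • ζ‖ := by
    rw [norm_mul, Complex.norm_conj, hζ, one_mul]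
  rw [← h1, ← h2]
  have hww : (starRingEnd ℂ) w * w = 1 := by
    rw [← Complex.normSq_eq_conj_mul_self, ← Complex.sq_norm, hw]; norm_num
  have hζζ : (starRingEnd ℂ) ζ * ζ = 1 := by
    rw [← Complex.normSq_eq_conj_mul_self, ← Complex.sq_norm, hζ]; norm_num
  have e1 : (starRingEnd ℂ) w * (ζ - ρ • w) = (starRingEnd ℂ) w * ζ - (ρ:ℂ) := by
    rw [Complex.real_smul]; rw [mul_sub]
    congr 1
    rw [← mul_assoc, mul_comm ((starRingEnd ℂ) w) (ρ:ℂ), mul_assoc, hww, mul_one]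
  have e2 : (starRingEnd ℂ) ζ * (w - ρ • ζ) = (starRingEnd ℂ) ζ * w - (ρ:ℂ) := by
    rw [Complex.real_smul]; rw [mul_sub]
    congr 1
    rw [← mul_assoc, mul_comm ((starRingEnd ℂ) ζ) (ρ:ℂ), mul_assoc, hζζ, mul_one]
  rw [e1, e2]
  have e3 : (starRingEnd ℂ) ((starRingEnd ℂ) w * ζ - (ρ:ℂ)) = (starRingEnd ℂ) ζ * w - (ρ:ℂ) := by
    simp [map_sub, map_mul, Complex.conj_conj, mul_comm]
  rw [← e3, Complex.norm_conj]

lemma prod_null_right {μ ν : Measure ℂ} [SigmaFinite ν] {N : Set ℂ} (hN : ν N = 0) :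
    (μ.prod ν) {p : ℂ × ℂ | p.2 ∈ N} = 0 := by
  have h0 : (μ.prod ν) (Set.univ ×ˢ toMeasurable ν N) = 0 := by
    rw [Measure.prod_prod, measure_toMeasurable, hN, mul_zero]
  refine measure_mono_null (fun p hp => ?_) h0
  exact Set.mem_prod.mpr ⟨trivial, subset_toMeasurable ν N hp⟩

lemma prod_null_left {μ ν : Measure ℂ} [SigmaFinite ν] {N : Set ℂ} (hN : μ N = 0) :
    (μ.prod ν) {p : ℂ × ℂ | p.1 ∈ N} = 0 := by
  have h0 : (μ.prod ν) (toMeasurable μ N ×ˢ Set.univ) = 0 := by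
    rw [Measure.prod_prod, measure_toMeasurable, hN, zero_mul]
  refine measure_mono_null (fun p hp => ?_) h0
  exact Set.mem_prod.mpr ⟨subset_toMeasurable μ N hp, trivial⟩

lemma mem_ball_abs {z : ℂ} : z ∈ ball (0:ℂ) 1 ↔ ‖z‖ < 1 := by
  simp [mem_ball_zero_iff]

lemma mem_circle_abs {z : ℂ} : z ∈ unitCircle ↔ ‖z‖ = 1 := by
  simp [unitCircle, mem_sphere_zero_iff_norm]

lemma abs_eq_norm (x : ℂ) : ‖x‖ = ‖x‖ := rfl

lemma exists_extension (h : ℂ → ℝ) (hh : ContinuousOn h unitCircle) :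
    ∃ g : ℂ → ℝ, Continuous g ∧ (∀ z ∈ unitCircle, g z = h z) ∧
      ∃ C : ℝ, 0 ≤ C ∧ ∀ z, |g z| ≤ C := by
  have hcl : IsClosed unitCircle := isClosed_sphere
  obtain ⟨g0, hg0⟩ := ContinuousMap.exists_restrict_eq (Y := ℝ) hcl
    ⟨unitCircle.restrict h, hh.restrict⟩
  have hg0eq : ∀ z ∈ unitCircle, g0 z = h z := by
    intro z hz
    have := congrFun (congrArg ContinuousMap.toFun hg0) ⟨z, hz⟩
    exact this
  obtain ⟨Cb, hCb⟩ := (isCompact_sphere (0:ℂ) 1).exists_bound_of_continuousOn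
    g0.continuous.continuousOn
  set C : ℝ := max Cb 0 with hC
  refine ⟨fun z => max (-C) (min C (g0 z)), continuous_const.max (continuous_const.min g0.continuous), ?_, C, le_max_right _ _, ?_⟩
  · intro z hz
    have hb : |g0 z| ≤ C := le_trans (hCb z hz) (le_max_left _ _)
    rw [abs_le] at hb
    show -C ⊔ (C ⊓ g0 z) = h z
    rw [inf_eq_right.mpr hb.2, sup_eq_right.mpr hb.1, hg0eq z hz]
  · intro z
    rw [abs_le]
    constructor
    · exact le_max_left _ _
    · exact max_le (by linarith [le_max_right Cb 0]) (min_le_left _ _)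

lemma exists_c (f : ℂ → ℂ) (hf : DifferentiableOn ℂ f (Metric.ball 0 1))
    (hmaps : Set.MapsTo f (Metric.ball 0 1) (Metric.ball 0 1))
    {ρ : ℝ} (h0 : 0 ≤ ρ) (h1 : ρ < 1) :
    ∃ c : ℝ, 0 ≤ c ∧ c < 1 ∧ ∀ w ∈ unitCircle, ‖f (ρ • w)‖ ≤ c := by
  have hsub : sphere (0:ℂ) ρ ⊆ ball 0 1 := fun x hx => by
    rw [mem_sphere_zero_iff_norm] at hx
    rw [mem_ball_zero_iff, hx]; exact h1
  have hcont : ContinuousOn (fun x => ‖f x‖) (sphere (0:ℂ) ρ) :=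
    (continuous_norm.comp_continuousOn (hf.continuousOn.mono hsub))
  obtain ⟨x₀, hx₀, hmax⟩ := IsCompact.exists_isMaxOn (isCompact_sphere (0:ℂ) ρ)
    ⟨(ρ:ℂ), by
      simpa [mem_sphere_zero_iff_norm, Complex.norm_real] using
        _root_.abs_of_nonneg h0⟩ hcont
  rw [isMaxOn_iff] at hmax
  refine ⟨‖f x₀‖, norm_nonneg _, ?_, ?_⟩
  · exact mem_ball_abs.mp (hmaps (hsub hx₀))
  · intro w hw
    apply hmax
    rw [mem_sphere_zero_iff_norm]
    show ‖ρ • w‖ = ρ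
    exact abs_smul_circle h0 hw

lemma key_step (f : ℂ → ℂ)
    (hf : DifferentiableOn ℂ f (Metric.ball 0 1))
    (hmaps : Set.MapsTo f (Metric.ball 0 1) (Metric.ball 0 1))
    (μ : ℂ → Measure ℂ)
    (hfin : ∀ α ∈ unitCircle, IsFiniteMeasure (μ α))
    (hsupp : ∀ α ∈ unitCircle, μ α unitCircleᶜ = 0)
    (hclark : ∀ α ∈ unitCircle, ∀ z ∈ Metric.ball (0:ℂ) 1,
      (1 - ‖f z‖ ^ 2) / ‖α - f z‖ ^ 2
        = ∫ ζ, (1 - ‖z‖ ^ 2) / ‖ζ - z‖ ^ 2 ∂(μ α))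
    (g : ℂ → ℝ) (hg : Continuous g) (C : ℝ) (hC0 : 0 ≤ C) (hC : ∀ z, |g z| ≤ C)
    {ρ : ℝ} (hρ0 : 1/2 ≤ ρ) (hρ1 : ρ < 1) :
    ∃ F : ℂ → ℝ, AEStronglyMeasurable F m
      ∧ (∫ α, F α ∂m = ∫ w, g w ∂m)
      ∧ ∀ α ∈ unitCircle,
          F α = ∫ ζ, (∫ w, g w * ((1-ρ^2)/‖w - ρ•ζ‖^2) ∂m) ∂(μ α) := by
  have hρ0' : (0:ℝ) < ρ := lt_of_lt_of_le (by norm_num) hρ0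
  -- a.e. measurable modification of w ↦ f (ρ • w)
  have hsub : unitCircle ⊆ ball (0:ℂ) ρ⁻¹ := by
    intro w hw
    rw [mem_ball_zero_iff, mem_circle_abs.mp hw]
    rw [lt_inv_comm₀ one_pos hρ0']
    simpa using hρ1
  have hmapsρ : ∀ w ∈ ball (0:ℂ) ρ⁻¹, ρ • w ∈ ball (0:ℂ) 1 := by
    intro w hw
    rw [mem_ball_zero_iff] at hw ⊢
    rw [norm_smul, Real.norm_eq_abs, _root_.abs_of_nonneg hρ0'.le]
    calc ρ * ‖w‖ < ρ * ρ⁻¹ := by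
          exact mul_lt_mul_of_pos_left hw hρ0'
      _ = 1 := mul_inv_cancel₀ (ne_of_gt hρ0')
  have haesm : AEStronglyMeasurable (fun w => f (ρ • w)) m := by
    apply aesm_of_continuousOn isOpen_ball hsub
    exact hf.continuousOn.comp ((continuous_const_smul ρ).continuousOn) hmapsρ
  set q : ℂ → ℂ := haesm.mk _ with hqdef
  have hqm : StronglyMeasurable q := haesm.stronglyMeasurable_mk
  have hqe : (fun w => f (ρ • w)) =ᵐ[m] q := haesm.ae_eq_mk
  obtain ⟨c, hc0, hc1, hcb⟩ := exists_c f hf hmaps hρ0'.le hρ1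
  -- good set
  have hgood : ∀ᵐ w ∂m, w ∈ unitCircle ∧ q w = f (ρ • w) ∧ ‖q w‖ ≤ c := by
    filter_upwards [m_ae_circle, hqe] with w hw hq
    exact ⟨hw, hq.symm, by rw [← hq]; exact hcb w hw⟩
  set K : ℂ → ℂ → ℝ := fun α y => (1 - ‖y‖ ^ 2) / ‖α - y‖ ^ 2 with hK
  -- joint measurability
  have hKmeas : Measurable fun p : ℂ × ℂ => g p.2 * K p.1 (q p.2) := by
    apply Measurable.mul (hg.measurable.comp measurable_snd)
    apply Measurable.div
    · exact (measurable_const.sub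
        (((continuous_norm.measurable.comp (hqm.measurable.comp measurable_snd))).pow_const 2))
    · exact ((continuous_norm.measurable.comp
        (measurable_fst.sub (hqm.measurable.comp measurable_snd))).pow_const 2)
  set F' : ℂ → ℝ := fun α => ∫ w, g w * K α (q w) ∂m with hF'
  have hF'sm : StronglyMeasurable F' := by
    apply MeasureTheory.StronglyMeasurable.integral_prod_right
      (f := fun α w => g w * K α (q w))
    exact hKmeas.stronglyMeasurable
  -- kernel bounds on good points
  have hKbdd : ∀ α ∈ unitCircle, ∀ y : ℂ, ‖y‖ ≤ c → 0 ≤ K α y ∧ K α y ≤ 1/(1-c)^2 := by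
    intro α hα y hy
    have h1 : 1 - c ≤ ‖α - y‖ := by
      calc 1 - c ≤ ‖α‖ - ‖y‖ := by
            rw [mem_circle_abs.mp hα]; linarith
        _ ≤ ‖α - y‖ := norm_sub_norm_le α y
    have h2 : (1-c)^2 ≤ ‖α - y‖ ^ 2 := by
      apply pow_le_pow_left₀ (by linarith) h1
    have hy1 : ‖y‖ ^ 2 ≤ 1 := by nlinarith [norm_nonneg y]
    constructor
    · exact div_nonneg (by linarith) (by positivity)

    · exact div_le_div₀ (by norm_num) (by nlinarith [norm_nonneg y])
        (pow_pos (by linarith) 2) h2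
  -- F agrees with F'
  set F : ℂ → ℝ := fun α =>
    ∫ w, g w * K α (f (ρ • w)) ∂m with hFdef
  have hFF' : F = F' := by
    funext α
    apply integral_congr_ae
    filter_upwards [hgood] with w hw
    rw [hw.2.1]
  refine ⟨F, ?_, ?_, ?_⟩
  · rw [hFF']; exact hF'sm.aestronglyMeasurable
  -- STEP D
  · rw [hFF']
    have hintg : Integrable (Function.uncurry fun α w => g w * K α (q w)) (m.prod m) := by
      apply Integrable.mono' (integrable_const (C * (1/(1-c)^2)))
      · exact (hKmeas.comp measurable_id).stronglyMeasurable.aestronglyMeasurable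
      · have h1 : ∀ᵐ p : ℂ × ℂ ∂(m.prod m), p.1 ∈ unitCircle := by
          rw [ae_iff]
          exact prod_null_left (N := {z | ¬ z ∈ unitCircle}) (ae_iff.mp m_ae_circle)
        have h2 : ∀ᵐ p : ℂ × ℂ ∂(m.prod m),
            p.2 ∈ unitCircle ∧ q p.2 = f (ρ • p.2) ∧ ‖q p.2‖ ≤ c := by
          rw [ae_iff]
          exact prod_null_right
            (N := {w | ¬ (w ∈ unitCircle ∧ q w = f (ρ • w) ∧ ‖q w‖ ≤ c)})
            (ae_iff.mp hgood)
        filter_upwards [h1, h2] with p hp1 hp2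
        obtain ⟨hKpos, hKle⟩ := hKbdd p.1 hp1 (q p.2) hp2.2.2
        rw [Function.uncurry, Real.norm_eq_abs, abs_mul, _root_.abs_of_nonneg hKpos]
        exact mul_le_mul (hC p.2) hKle hKpos hC0
    have hswap := integral_integral_swap hintg
    rw [hF'] at *
    rw [hswap]
    apply integral_congr_ae
    filter_upwards [hgood] with w hw
    have habs : ‖q w‖ < 1 := lt_of_le_of_lt hw.2.2 hc1
    have hpois := poisson_integral_one habs
    rw [integral_const_mul]
    simp only [hK]
    rw [hpois, mul_one]
  -- STEP C
  · intro α hα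
    haveI := hfin α hα
    have hμcirc : ∀ᵐ ζ ∂(μ α), ζ ∈ unitCircle := by
      rw [ae_iff]
      convert hsupp α hα using 2; rfl
    -- rewrite F α using hclark
    have hstep1 : F α = ∫ w, ∫ ζ, g w * ((1-ρ^2) / ‖ζ - ρ • w‖ ^ 2) ∂(μ α) ∂m := by
      apply integral_congr_ae
      filter_upwards [m_ae_circle] with w hw
      have hball : ρ • w ∈ ball (0:ℂ) 1 := hmapsρ w (hsub hw)
      have hcl := hclark α hα (ρ • w) hball
      have habsρ : ‖ρ • w‖ = ρ := abs_smul_circle hρ0'.le hw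
      rw [habsρ] at hcl
      calc g w * K α (f (ρ • w))
          = g w * ∫ ζ, (1-ρ^2) / ‖ζ - ρ • w‖ ^ 2 ∂(μ α) := by
            simp only [hK]; rw [hcl]
        _ = ∫ ζ, g w * ((1-ρ^2) / ‖ζ - ρ • w‖ ^ 2) ∂(μ α) :=
            (integral_const_mul _ _).symm
    -- Fubini over m.prod (μ α)
    have hintg2 : Integrable
        (Function.uncurry fun w ζ => g w * ((1-ρ^2) / ‖ζ - ρ • w‖ ^ 2))
        (m.prod (μ α)) := by
      apply Integrable.mono' (integrable_const (C * ((1-ρ^2)/(1-ρ)^2)))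
      · apply Measurable.aestronglyMeasurable
        apply Measurable.mul (hg.measurable.comp measurable_fst)
        apply Measurable.div measurable_const
        exact ((continuous_norm.measurable.comp
          (measurable_snd.sub ((continuous_const_smul ρ).measurable.comp
            measurable_fst))).pow_const 2)
      · have h1 : ∀ᵐ p : ℂ × ℂ ∂(m.prod (μ α)), p.1 ∈ unitCircle := by
          rw [ae_iff]
          exact prod_null_left (N := {z | ¬ z ∈ unitCircle}) (ae_iff.mp m_ae_circle)
        have h2 : ∀ᵐ p : ℂ × ℂ ∂(m.prod (μ α)), p.2 ∈ unitCircle := by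
          rw [ae_iff]
          exact prod_null_right (N := {z | ¬ z ∈ unitCircle}) (ae_iff.mp hμcirc)
        filter_upwards [h1, h2] with p hp1 hp2
        have hlow : 1 - ρ ≤ ‖p.2 - ρ • p.1‖ := by
          calc 1 - ρ = ‖p.2‖ - ‖ρ • p.1‖ := by
                rw [mem_circle_abs.mp hp2, abs_smul_circle hρ0'.le hp1]
            _ ≤ ‖p.2 - ρ • p.1‖ := by
                exact norm_sub_norm_le _ _
        have hlow2 : (1-ρ)^2 ≤ ‖p.2 - ρ • p.1‖ ^ 2 :=
          pow_le_pow_left₀ (by linarith) hlow 2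
        have hker_nonneg : 0 ≤ (1-ρ^2) / ‖p.2 - ρ • p.1‖ ^ 2 :=
          div_nonneg (by nlinarith) (by positivity)
        rw [Function.uncurry, Real.norm_eq_abs, abs_mul, _root_.abs_of_nonneg hker_nonneg]
        apply mul_le_mul (hC p.1) ?_ hker_nonneg hC0
        exact div_le_div₀ (by nlinarith) le_rfl (pow_pos (by linarith) 2) hlow2
    have hswap2 := integral_integral_swap hintg2
    rw [hstep1, hswap2]
    apply integral_congr_ae
    filter_upwards [hμcirc] with ζ hζ
    apply integral_congr_ae
    filter_upwards [m_ae_circle] with w hw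
    rw [kernel_symm (mem_circle_abs.mp hw) (mem_circle_abs.mp hζ)]

lemma Pg_intg {ρ : ℝ} (hρ0 : 0 ≤ ρ) (hρ1 : ρ < 1) {z : ℂ} (hz : ‖z‖ = ρ) :
    Integrable (fun w => (1-ρ^2) / ‖w - z‖ ^ 2) m := by
  apply integrable_of_bdd (meas_kernel _ _).aestronglyMeasurable (C := (1-ρ^2)/(1-ρ)^2)
  filter_upwards [m_ae_circle] with w hw
  have hnn : 0 ≤ (1-ρ^2) / ‖w - z‖ ^ 2 := div_nonneg (by nlinarith) (by positivity)
  rw [Real.norm_eq_abs, _root_.abs_of_nonneg hnn]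
  have hlow : 1 - ρ ≤ ‖w - z‖ := by
    calc 1 - ρ = ‖w‖ - ‖z‖ := by rw [mem_circle_abs.mp hw, hz]
      _ ≤ ‖w - z‖ := by exact norm_sub_norm_le _ _
  exact div_le_div₀ (by nlinarith) le_rfl (pow_pos (by linarith) 2)
    (pow_le_pow_left₀ (by linarith) hlow 2)

lemma Pg_bound (g : ℂ → ℝ) (hg : Continuous g) (C : ℝ) (hC0 : 0 ≤ C) (hC : ∀ z, |g z| ≤ C)
    {ρ : ℝ} (hρ0 : 0 ≤ ρ) (hρ1 : ρ < 1) {ζ : ℂ} (hζ : ζ ∈ unitCircle) :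
    |∫ w, g w * ((1-ρ^2) / ‖w - ρ•ζ‖ ^ 2) ∂m| ≤ C := by
  have hzabs : ‖ρ • ζ‖ = ρ := abs_smul_circle hρ0 hζ
  have hpois : ∫ w, (1-ρ^2) / ‖w - ρ•ζ‖ ^ 2 ∂m = 1 := by
    have := poisson_integral_one (z := ρ • ζ) (by rw [hzabs]; exact hρ1)
    rwa [hzabs] at this
  have hPintg := Pg_intg hρ0 hρ1 hzabs
  rw [← Real.norm_eq_abs]
  calc ‖∫ w, g w * ((1-ρ^2) / ‖w - ρ•ζ‖ ^ 2) ∂m‖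
      ≤ ∫ w, C * ((1-ρ^2) / ‖w - ρ•ζ‖ ^ 2) ∂m := by
        apply norm_integral_le_of_norm_le (hPintg.const_mul C)
        filter_upwards [] with w
        have hnn : 0 ≤ (1-ρ^2) / ‖w - ρ•ζ‖ ^ 2 :=
          div_nonneg (by nlinarith) (by positivity)
        rw [Real.norm_eq_abs, abs_mul, _root_.abs_of_nonneg hnn]
        exact mul_le_mul_of_nonneg_right (hC w) hnn
    _ = C := by rw [integral_const_mul, hpois, mul_one]

lemma Pg_meas (g : ℂ → ℝ) (hg : Continuous g) {ρ : ℝ} :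
    StronglyMeasurable (fun ζ => ∫ w, g w * ((1-ρ^2) / ‖w - ρ•ζ‖ ^ 2) ∂m) := by
  apply MeasureTheory.StronglyMeasurable.integral_prod_right
    (f := fun ζ w => g w * ((1-ρ^2) / ‖w - ρ•ζ‖ ^ 2))
  apply Measurable.stronglyMeasurable
  apply Measurable.mul (hg.measurable.comp measurable_snd)
  apply Measurable.div measurable_const
  exact ((continuous_norm.measurable.comp
    (measurable_snd.sub ((continuous_const_smul ρ).measurable.comp
      measurable_fst))).pow_const 2)

/-- The Aleksandrov disintegration theorem for the Clark measures of a
holomorphic self-map of the disc. -/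
theorem stmt3 (f : ℂ → ℂ)
    (hf : DifferentiableOn ℂ f (Metric.ball 0 1))
    (hmaps : Set.MapsTo f (Metric.ball 0 1) (Metric.ball 0 1))
    (μ : ℂ → Measure ℂ)
    (hfin : ∀ α ∈ unitCircle, IsFiniteMeasure (μ α))
    (hsupp : ∀ α ∈ unitCircle, μ α unitCircleᶜ = 0)
    (hclark : ∀ α ∈ unitCircle, ∀ z ∈ Metric.ball (0:ℂ) 1,
      (1 - ‖f z‖ ^ 2) / ‖α - f z‖ ^ 2
        = ∫ ζ, (1 - ‖z‖ ^ 2) / ‖ζ - z‖ ^ 2 ∂(μ α)) :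
    ∀ h : ℂ → ℝ, ContinuousOn h unitCircle →
      ∫ z, h z ∂m = ∫ α, (∫ z, h z ∂(μ α)) ∂m := by
  intro h hh
  obtain ⟨g, hgc, hge, C, hC0, hC⟩ := exists_extension h hh
  have h0ball : (0:ℂ) ∈ ball (0:ℂ) 1 := mem_ball_self one_pos
  have hf0 : ‖f 0‖ < 1 := mem_ball_abs.mp (hmaps h0ball)
  set C' : ℝ := (1 - ‖f 0‖^2) / (1 - ‖f 0‖)^2 with hC'
  have hC'0 : 0 ≤ C' :=
    div_nonneg (by nlinarith [norm_nonneg (f 0)]) (by positivity)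
  have hμcirc : ∀ α ∈ unitCircle, ∀ᵐ ζ ∂(μ α), ζ ∈ unitCircle := by
    intro α hα
    rw [ae_iff]
    convert hsupp α hα using 2; rfl
  -- mass bound
  have hmass : ∀ α ∈ unitCircle, ((μ α) Set.univ).toReal ≤ C' := by
    intro α hα
    haveI := hfin α hα
    have h1 : ∫ ζ, (1 - ‖(0:ℂ)‖ ^ 2) / ‖ζ - 0‖ ^ 2 ∂(μ α)
        = ((μ α) Set.univ).toReal := by
      calc ∫ ζ, (1 - ‖(0:ℂ)‖ ^ 2) / ‖ζ - 0‖ ^ 2 ∂(μ α)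
          = ∫ _, (1:ℝ) ∂(μ α) := by
            apply integral_congr_ae
            filter_upwards [hμcirc α hα] with ζ hζ
            rw [norm_zero, sub_zero, mem_circle_abs.mp hζ]
            norm_num
        _ = ((μ α) Set.univ).toReal := by simp [measureReal_def]
    have h2 := (hclark α hα 0 h0ball).trans h1
    rw [← h2]
    have h3 : 1 - ‖f 0‖ ≤ ‖α - f 0‖ := by
      calc 1 - ‖f 0‖ = ‖α‖ - ‖f 0‖ := by
            rw [mem_circle_abs.mp hα]
        _ ≤ ‖α - f 0‖ := by exact norm_sub_norm_le _ _
    exact div_le_div₀ (by nlinarith [norm_nonneg (f 0)]) le_rfl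
      (pow_pos (by linarith) 2) (pow_le_pow_left₀ (by linarith) h3 2)
  -- the sequence of radii
  set rr : ℕ → ℝ := fun n => 1 - 1/(n+2) with hrr
  have hrr0 : ∀ n : ℕ, 1/2 ≤ rr n := by
    intro n
    have h2 : (2:ℝ) ≤ (n:ℝ) + 2 := by
      have := Nat.cast_nonneg (α := ℝ) n
      linarith
    have : 1/((n:ℝ)+2) ≤ 1/2 := by
      apply div_le_div_of_nonneg_left (by norm_num) (by norm_num) h2
    simp only [hrr]; linarith
  have hrr1 : ∀ n : ℕ, rr n < 1 := by
    intro n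
    have : 0 < 1/((n:ℝ)+2) := by positivity
    simp only [hrr]; linarith
  have hrrt : ∀ r₀ : ℝ, r₀ < 1 → ∃ N : ℕ, ∀ n ≥ N, r₀ ≤ rr n := by
    intro r₀ hr₀
    obtain ⟨N, hN⟩ := exists_nat_gt (1/(1 - r₀))
    refine ⟨N, fun n hn => ?_⟩
    have hpos : 0 < 1 - r₀ := by linarith
    have h1 : 1/(1 - r₀) < (n:ℝ) + 2 := by
      calc 1/(1-r₀) < (N:ℝ) := hN
        _ ≤ (n:ℝ) := by exact_mod_cast hn
        _ ≤ (n:ℝ) + 2 := by linarith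
    have h2 : 1/((n:ℝ)+2) < 1 - r₀ := by
      rw [div_lt_iff₀ (by positivity)]
      rw [div_lt_iff₀ hpos] at h1
      linarith [mul_comm (1-r₀) ((n:ℝ)+2)]
    simp only [hrr]; linarith
  -- apply key_step for each n
  choose F hFm hFeq hFrep using fun n : ℕ =>
    key_step f hf hmaps μ hfin hsupp hclark g hgc C hC0 hC (hrr0 n) (hrr1 n)
  -- uniform bound
  have hbound : ∀ n : ℕ, ∀ᵐ α ∂m, ‖F n α‖ ≤ C * C' := by
    intro n
    filter_upwards [m_ae_circle] with α hα
    haveI := hfin α hα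
    rw [hFrep n α hα, Real.norm_eq_abs]
    have hPgb : ∀ ζ ∈ unitCircle,
        |∫ w, g w * ((1-(rr n)^2) / ‖w - (rr n)•ζ‖ ^ 2) ∂m| ≤ C :=
      fun ζ hζ => Pg_bound g hgc C hC0 hC (le_trans (by norm_num : (0:ℝ) ≤ 1/2) (hrr0 n)) (hrr1 n) hζ
    calc |∫ ζ, (∫ w, g w * ((1-(rr n)^2) / ‖w - (rr n)•ζ‖ ^ 2) ∂m) ∂(μ α)|
        ≤ ∫ _, C ∂(μ α) := by
          rw [← Real.norm_eq_abs]
          apply norm_integral_le_of_norm_le (integrable_const C)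
          filter_upwards [hμcirc α hα] with ζ hζ
          rw [Real.norm_eq_abs]
          exact hPgb ζ hζ
      _ = ((μ α) Set.univ).toReal * C := by simp [smul_eq_mul, measureReal_def]
      _ ≤ C' * C := mul_le_mul_of_nonneg_right (hmass α hα) hC0
      _ = C * C' := by ring
  -- pointwise limit
  have hlim : ∀ᵐ α ∂m, Filter.Tendsto (fun n => F n α) atTop (𝓝 (∫ ζ, h ζ ∂(μ α))) := by
    filter_upwards [m_ae_circle] with α hα
    haveI := hfin α hα
    have hgh : ∫ ζ, h ζ ∂(μ α) = ∫ ζ, g ζ ∂(μ α) := by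
      apply integral_congr_ae
      filter_upwards [hμcirc α hα] with ζ hζ
      exact (hge ζ hζ).symm
    rw [hgh]
    rw [Metric.tendsto_atTop]
    intro ε hε
    set M : ℝ := ((μ α) Set.univ).toReal with hM
    have hM0 : 0 ≤ M := ENNReal.toReal_nonneg
    set ε' : ℝ := ε / (2*(M+1)) with hε'
    have hε'0 : 0 < ε' := by positivity
    obtain ⟨r₀, hr₀0, hr₀1, hunif⟩ := poisson_unif g hgc C hC hε'0
    obtain ⟨N, hN⟩ := hrrt r₀ hr₀1
    refine ⟨N, fun n hn => ?_⟩
    set Pg : ℂ → ℝ := fun ζ => ∫ w, g w * ((1-(rr n)^2) / ‖w - (rr n)•ζ‖ ^ 2) ∂m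
      with hPg
    have hunif' : ∀ ζ ∈ unitCircle, |Pg ζ - g ζ| ≤ ε' :=
      fun ζ hζ => hunif (rr n) (hN n hn) (hrr1 n) ζ hζ
    have hPgint : Integrable Pg (μ α) := by
      apply integrable_of_bdd (Pg_meas g hgc).aestronglyMeasurable (C := C + ε')
      filter_upwards [hμcirc α hα] with ζ hζ
      have := hunif' ζ hζ
      have h2 := hge ζ hζ
      rw [Real.norm_eq_abs]
      have := abs_sub_abs_le_abs_sub (Pg ζ) (g ζ)
      have h3 := hC ζ
      linarith [abs_sub_abs_le_abs_sub (Pg ζ) (g ζ), hunif' ζ hζ]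
    have hgint : Integrable g (μ α) := by
      apply integrable_of_bdd hgc.measurable.aestronglyMeasurable (C := C)
      filter_upwards [] with ζ
      rw [Real.norm_eq_abs]; exact hC ζ
    rw [Real.dist_eq, hFrep n α hα, ← hPg, ← integral_sub hPgint hgint]
    have hle : |∫ ζ, (Pg ζ - g ζ) ∂(μ α)| ≤ ε' * M := by
      rw [← Real.norm_eq_abs]
      calc ‖∫ ζ, (Pg ζ - g ζ) ∂(μ α)‖ ≤ ∫ _, ε' ∂(μ α) := by
            apply norm_integral_le_of_norm_le (integrable_const ε')
            filter_upwards [hμcirc α hα] with ζ hζ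
            rw [Real.norm_eq_abs]
            exact hunif' ζ hζ
        _ = M * ε' := by simp [smul_eq_mul, hM, measureReal_def]
        _ = ε' * M := by ring
    have : ε' * M < ε := by
      rw [hε']
      rw [div_mul_eq_mul_div, div_lt_iff₀ (by positivity)]
      nlinarith
    linarith
  -- dominated convergence
  have hDCT := tendsto_integral_of_dominated_convergence (bound := fun _ => C * C')
    hFm (integrable_const _) hbound hlim
  have hconst : ∀ n : ℕ, ∫ α, F n α ∂m = ∫ w, g w ∂m := hFeq
  have hgh : ∫ z, h z ∂m = ∫ w, g w ∂m := by
    apply integral_congr_ae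
    filter_upwards [m_ae_circle] with z hz
    exact (hge z hz).symm
  rw [hgh]
  have hDCT' : Filter.Tendsto (fun _ : ℕ => ∫ w, g w ∂m) atTop
      (𝓝 (∫ α, (∫ z, h z ∂(μ α)) ∂m)) := by
    convert hDCT using 2 with n
    exact (hconst n).symm
  exact tendsto_nhds_unique tendsto_const_nhds hDCT'
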